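/- arXiv:math/0507244 — 3 statements merged into one kernel-verified Lean document; each statement's English description precedes it below -/
import Mathlib

section
/- The map # : Ω¹(M) → Vect(M) is a Lie algebra homomorphism: #[α,β] = [#α, #β] for all 1-forms α, β on a Poisson manifold. -/
/-- Partial derivative of a function on `ℝⁿ` in the `k`-th coordinate direction. -/
noncomputable def pd {n : ℕ} (k : Fin n) (f : (Fin n → ℝ) → ℝ) (x : Fin n → ℝ) : ℝ :=
  fderiv ℝ f x (Pi.single k 1)

/-- Components of the vector field `#α`: `(#α)^s = α_i π^{is}`. -/
noncomputable def sharp {n : ℕ} (π : Fin n → Fin n → (Fin n → ℝ) → ℝ)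
    (α : Fin n → (Fin n → ℝ) → ℝ) (s : Fin n) (x : Fin n → ℝ) : ℝ :=
  ∑ i, α i x * π i s x

/-- Components of the Lie derivative of a 1-form `β` along a vector field `X`. -/
noncomputable def lieDer {n : ℕ} (X : Fin n → (Fin n → ℝ) → ℝ)
    (β : Fin n → (Fin n → ℝ) → ℝ) (k : Fin n) (x : Fin n → ℝ) : ℝ :=
  ∑ s, X s x * pd s (β k) x + ∑ s, β s x * pd k (X s) x

/-- Components of the Koszul bracket of 1-forms. -/
noncomputable def koszul {n : ℕ} (π : Fin n → Fin n → (Fin n → ℝ) → ℝ)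
    (α β : Fin n → (Fin n → ℝ) → ℝ) (k : Fin n) (x : Fin n → ℝ) : ℝ :=
  lieDer (sharp π α) β k x - lieDer (sharp π β) α k x
    - pd k (fun y => ∑ i, ∑ j, π i j y * α i y * β j y) x

/-
In coordinates, antisymmetry of `π` turns the Koszul bracket into
`[α,β]_j = (#α)^s ∂_s β_j - (#β)^s ∂_s α_j + α_i β_l ∂_j π^{il}`.
Applying `#` and comparing with `[#α,#β]^k = (#α)^s ∂_s (#β)^k - (#β)^s ∂_s (#α)^k`, the terms
containing derivatives of `α` and `β` agree, and what is left is `α_i β_l` contracted with the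
Jacobiator of `π`, which vanishes.
-/

section

variable {n : ℕ}

lemma pd_sum {ι : Type*} (t : Finset ι) (f : ι → (Fin n → ℝ) → ℝ) (k : Fin n) (x : Fin n → ℝ)
    (hf : ∀ i ∈ t, DifferentiableAt ℝ (f i) x) :
    pd k (fun y => ∑ i ∈ t, f i y) x = ∑ i ∈ t, pd k (f i) x := by
  simp [pd, fderiv_fun_sum hf]

lemma pd_mul {f g : (Fin n → ℝ) → ℝ} (k : Fin n) {x : Fin n → ℝ}
    (hf : DifferentiableAt ℝ f x) (hg : DifferentiableAt ℝ g x) :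
    pd k (fun y => f y * g y) x = pd k f x * g x + f x * pd k g x := by
  simp [pd, fderiv_fun_mul hf hg]
  ring

lemma pd_neg (f : (Fin n → ℝ) → ℝ) (k : Fin n) (x : Fin n → ℝ) :
    pd k (fun y => -f y) x = -pd k f x := by
  simp [pd]

lemma pd_antisymm {π : Fin n → Fin n → (Fin n → ℝ) → ℝ} (hanti : ∀ i j y, π i j y = -π j i y)
    (s i j : Fin n) (x : Fin n → ℝ) : pd s (π i j) x = -pd s (π j i) x := by
  rw [← pd_neg]
  exact congrArg (pd s · x) (funext (hanti i j))

variable {π : Fin n → Fin n → (Fin n → ℝ) → ℝ} {α β : Fin n → (Fin n → ℝ) → ℝ} {x : Fin n → ℝ}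

lemma pd_sharp (hπ : ∀ i j, DifferentiableAt ℝ (π i j) x) (hα : ∀ i, DifferentiableAt ℝ (α i) x)
    (s k : Fin n) :
    pd s (sharp π α k) x = ∑ i, (pd s (α i) x * π i k x + α i x * pd s (π i k) x) := by
  change pd s (fun y => ∑ i, α i y * π i k y) x = _
  rw [pd_sum _ _ _ _ fun i _ => (hα i).fun_mul (hπ i k)]
  exact Finset.sum_congr rfl fun i _ => pd_mul s (hα i) (hπ i k)

lemma pd_poissonPairing (hπ : ∀ i j, DifferentiableAt ℝ (π i j) x)
    (hα : ∀ i, DifferentiableAt ℝ (α i) x) (hβ : ∀ i, DifferentiableAt ℝ (β i) x) (k : Fin n) :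
    pd k (fun y => ∑ i, ∑ j, π i j y * α i y * β j y) x
      = ∑ i, ∑ j, ((pd k (π i j) x * α i x + π i j x * pd k (α i) x) * β j x
          + π i j x * α i x * pd k (β j) x) := by
  have hπα : ∀ i j, DifferentiableAt ℝ (fun y => π i j y * α i y) x :=
    fun i j => (hπ i j).fun_mul (hα i)
  rw [pd_sum _ _ _ _ fun i _ => DifferentiableAt.fun_sum fun j _ => (hπα i j).fun_mul (hβ j)]
  refine Finset.sum_congr rfl fun i _ => ?_
  rw [pd_sum _ _ _ _ fun j _ => (hπα i j).fun_mul (hβ j)]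
  refine Finset.sum_congr rfl fun j _ => ?_
  rw [pd_mul k (hπα i j) (hβ j), pd_mul k (hπ i j) (hα i)]

lemma koszul_apply (hanti : ∀ i j y, π i j y = -π j i y)
    (hπ : ∀ i j, DifferentiableAt ℝ (π i j) x)
    (hα : ∀ i, DifferentiableAt ℝ (α i) x) (hβ : ∀ i, DifferentiableAt ℝ (β i) x) (k : Fin n) :
    koszul π α β k x = ∑ s, sharp π α s x * pd s (β k) x - ∑ s, sharp π β s x * pd s (α k) x
      + ∑ i, ∑ j, α i x * β j x * pd k (π i j) x := by
  simp only [koszul, lieDer, pd_sharp hπ hα, pd_sharp hπ hβ, pd_poissonPairing hπ hα hβ]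
  have h : ∑ s, β s x * ∑ i, (pd k (α i) x * π i s x + α i x * pd k (π i s) x)
      - ∑ s, α s x * ∑ i, (pd k (β i) x * π i s x + β i x * pd k (π i s) x)
      - ∑ i, ∑ j, ((pd k (π i j) x * α i x + π i j x * pd k (α i) x) * β j x
          + π i j x * α i x * pd k (β j) x)
      = ∑ i, ∑ j, α i x * β j x * pd k (π i j) x := by
    simp only [Finset.mul_sum]
    rw [Finset.sum_comm (f := fun s i => β s x * _), ← Finset.sum_sub_distrib,
      ← Finset.sum_sub_distrib]
    refine Finset.sum_congr rfl fun i _ => ?_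
    simp only [← Finset.sum_sub_distrib]
    refine Finset.sum_congr rfl fun j _ => ?_
    rw [hanti j i, pd_antisymm hanti k j i]
    ring
  linear_combination h

lemma sum_sharp_mul_sum_mul (γ δ : Fin n → (Fin n → ℝ) → ℝ) (f : Fin n → Fin n → ℝ) :
    ∑ s, sharp π γ s x * ∑ j, δ j x * f s j
      = ∑ i, ∑ j, γ i x * δ j x * ∑ s, π i s x * f s j := by
  simp only [sharp, Finset.sum_mul, Finset.mul_sum]
  rw [Finset.sum_comm_cycle, Finset.sum_comm_cycle, Finset.sum_comm]
  refine Finset.sum_congr rfl fun i _ => Finset.sum_congr rfl fun j _ =>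
    Finset.sum_congr rfl fun s _ => by ring

variable (α β) in
lemma jacobi_contract (hanti : ∀ i j y, π i j y = -π j i y)
    (hJac : ∀ i j l, ∑ s, (π i s x * pd s (π j l) x + π j s x * pd s (π l i) x
      + π l s x * pd s (π i j) x) = 0) (k : Fin n) :
    ∑ j, (∑ i, ∑ l, α i x * β l x * pd j (π i l) x) * π j k x
      = ∑ s, sharp π α s x * ∑ j, β j x * pd s (π j k) x
        - ∑ s, sharp π β s x * ∑ j, α j x * pd s (π j k) x := by
  have hJ : ∀ i l, ∑ s, π s k x * pd s (π i l) x
      = ∑ s, π i s x * pd s (π l k) x - ∑ s, π l s x * pd s (π i k) x := by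
    intro i l
    have h := hJac i l k
    simp only [Finset.sum_add_distrib] at h
    have e1 : ∑ s, π s k x * pd s (π i l) x = -∑ s, π k s x * pd s (π i l) x := by
      rw [← Finset.sum_neg_distrib]
      exact Finset.sum_congr rfl fun s _ => by rw [hanti s k]; ring
    have e2 : ∑ s, π l s x * pd s (π i k) x = -∑ s, π l s x * pd s (π k i) x := by
      rw [← Finset.sum_neg_distrib]
      exact Finset.sum_congr rfl fun s _ => by rw [pd_antisymm hanti s i k]; ring
    rw [e1, e2]
    linarith
  have hL : ∑ j, (∑ i, ∑ l, α i x * β l x * pd j (π i l) x) * π j k x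
      = ∑ i, ∑ l, α i x * β l x * ∑ s, π s k x * pd s (π i l) x := by
    simp only [Finset.sum_mul, Finset.mul_sum]
    rw [← Finset.sum_comm_cycle]
    refine Finset.sum_congr rfl fun i _ => Finset.sum_congr rfl fun l _ =>
      Finset.sum_congr rfl fun s _ => by ring
  rw [hL, sum_sharp_mul_sum_mul, sum_sharp_mul_sum_mul]
  conv_rhs => arg 2; rw [Finset.sum_comm]
  rw [← Finset.sum_sub_distrib]
  refine Finset.sum_congr rfl fun i _ => ?_
  rw [← Finset.sum_sub_distrib]
  exact Finset.sum_congr rfl fun l _ => by rw [hJ]; ring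

end

/-- `#` is a Lie algebra homomorphism from 1-forms (with the Koszul bracket) to vector
fields: `#[α,β] = [#α, #β]`. -/
theorem sharp_lie_algebra_hom
    (n : ℕ) (π : Fin n → Fin n → (Fin n → ℝ) → ℝ)
    (hπ : ∀ i j, ContDiff ℝ (⊤ : ℕ∞) (π i j))
    (hanti : ∀ i j (x : Fin n → ℝ), π i j x = -π j i x)
    (hJac : ∀ i j l (x : Fin n → ℝ),
      ∑ s, (π i s x * pd s (π j l) x + π j s x * pd s (π l i) x
            + π l s x * pd s (π i j) x) = 0)
    (α β : Fin n → (Fin n → ℝ) → ℝ)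
    (hα : ∀ i, ContDiff ℝ (⊤ : ℕ∞) (α i)) (hβ : ∀ i, ContDiff ℝ (⊤ : ℕ∞) (β i)) :
    ∀ k (x : Fin n → ℝ),
      sharp π (fun j => koszul π α β j) k x
        = ∑ s, sharp π α s x * pd s (sharp π β k) x
          - ∑ s, sharp π β s x * pd s (sharp π α k) x := by
  intro k x
  have hπx i j : DifferentiableAt ℝ (π i j) x := (hπ i j).differentiable (by simp) x
  have hαx i : DifferentiableAt ℝ (α i) x := (hα i).differentiable (by simp) x
  have hβx i : DifferentiableAt ℝ (β i) x := (hβ i).differentiable (by simp) x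
  have hswap (γ δ : Fin n → (Fin n → ℝ) → ℝ) :
      ∑ j, (∑ s, sharp π γ s x * pd s (δ j) x) * π j k x
        = ∑ s, sharp π γ s x * ∑ j, pd s (δ j) x * π j k x := by
    simp only [Finset.sum_mul, Finset.mul_sum, mul_assoc]
    exact Finset.sum_comm
  change ∑ j, koszul π α β j x * π j k x = _
  simp only [koszul_apply hanti hπx hαx hβx, pd_sharp hπx hαx, pd_sharp hπx hβx,
    add_mul, sub_mul, mul_add, Finset.sum_add_distrib, Finset.sum_sub_distrib]
  linear_combination hswap α β - hswap β α + jacobi_contract α β hanti (hJac · · · x) k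
end

section
/- Two nonlinear contravariant connections written locally as D^{dx^i} = π^{is} ∂/∂x^s − A^i_s ∂/∂ξ_s and †D^{dx^i} = π^{is} ∂/∂x^s − K^i_s ∂/∂ξ_s are associated (satisfy [†D^α, #β^] − [D^β, #α^] − (#[α,β])^ = 0 for all 1-forms α, β) if and only if π^{is} A^j_s = π^{js} K^i_s. -/
/-- Partial derivative in the base (`x`) direction, `p = (x, ξ)`. -/
noncomputable def pdx {n : ℕ} (k : Fin n)
    (f : (Fin n → ℝ) × (Fin n → ℝ) → ℝ) (p : (Fin n → ℝ) × (Fin n → ℝ)) : ℝ :=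
  fderiv ℝ f p (Pi.single k 1, 0)

/-- Partial derivative in the fibre (`ξ`) direction. -/
noncomputable def pdxi {n : ℕ} (k : Fin n)
    (f : (Fin n → ℝ) × (Fin n → ℝ) → ℝ) (p : (Fin n → ℝ) × (Fin n → ℝ)) : ℝ :=
  fderiv ℝ f p (0, Pi.single k 1)

/-- The nonlinear contravariant connection `π^{is} ∂/∂x^s − A^i_s ∂/∂ξ_s`. -/
noncomputable def Dop {n : ℕ} (π : Fin n → Fin n → (Fin n → ℝ) → ℝ)
    (A : Fin n → Fin n → (Fin n → ℝ) × (Fin n → ℝ) → ℝ) (m : Fin n)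
    (F : (Fin n → ℝ) × (Fin n → ℝ) → ℝ) (p : (Fin n → ℝ) × (Fin n → ℝ)) : ℝ :=
  ∑ s, π m s p.1 * pdx s F p - ∑ s, A m s p * pdxi s F p

/-- The fibrewise linear function `(#dx^i)^ = π^{is} ξ_s`. -/
noncomputable def Ph {n : ℕ} (π : Fin n → Fin n → (Fin n → ℝ) → ℝ) (i : Fin n)
    (p : (Fin n → ℝ) × (Fin n → ℝ)) : ℝ :=
  ∑ s, π i s p.1 * p.2 s

/-- The fibrewise linear function `(#[dx^i,dx^j])^ = (∂π^{ij}/∂x^s) π^{sk} ξ_k`. -/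
noncomputable def PhBr {n : ℕ} (π : Fin n → Fin n → (Fin n → ℝ) → ℝ) (i j : Fin n)
    (p : (Fin n → ℝ) × (Fin n → ℝ)) : ℝ :=
  ∑ s, ∑ k, pd s (π i j) p.1 * π s k p.1 * p.2 k

/-! Each `D^{dx^i}` is a first-order differential operator, so its commutator with multiplication
by a differentiable `G` is multiplication by `D^{dx^i} G`. The association condition is therefore
multiplication by `†D^{dx^i}(#dx^j)^ − D^{dx^j}(#dx^i)^ − (#[dx^i,dx^j])^`. Computed on the
fibrewise linear functions `(#dx^j)^ = π^{js} ξ_s`, the terms involving `∂π` cancel by the Jacobi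
identity and what remains is `π^{is} A^j_s − π^{js} K^i_s`; testing against `F = 1` gives the
converse. -/

section
variable {n : ℕ}

theorem pdx_mul {G F : (Fin n → ℝ) × (Fin n → ℝ) → ℝ} {p : (Fin n → ℝ) × (Fin n → ℝ)}
    (hG : DifferentiableAt ℝ G p) (hF : DifferentiableAt ℝ F p) (k : Fin n) :
    pdx k (fun q => G q * F q) p = pdx k G p * F p + G p * pdx k F p := by
  simp only [pdx, fderiv_fun_mul hG hF, add_apply, smul_apply, smul_eq_mul]
  ring

theorem pdxi_mul {G F : (Fin n → ℝ) × (Fin n → ℝ) → ℝ} {p : (Fin n → ℝ) × (Fin n → ℝ)}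
    (hG : DifferentiableAt ℝ G p) (hF : DifferentiableAt ℝ F p) (k : Fin n) :
    pdxi k (fun q => G q * F q) p = pdxi k G p * F p + G p * pdxi k F p := by
  simp only [pdxi, fderiv_fun_mul hG hF, add_apply, smul_apply, smul_eq_mul]
  ring

theorem Dop_mul_sub_mul_Dop (π : Fin n → Fin n → (Fin n → ℝ) → ℝ)
    (A : Fin n → Fin n → (Fin n → ℝ) × (Fin n → ℝ) → ℝ) (m : Fin n)
    {G F : (Fin n → ℝ) × (Fin n → ℝ) → ℝ} {p : (Fin n → ℝ) × (Fin n → ℝ)}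
    (hG : DifferentiableAt ℝ G p) (hF : DifferentiableAt ℝ F p) :
    Dop π A m (fun q => G q * F q) p - G p * Dop π A m F p = Dop π A m G p * F p := by
  simp only [Dop, pdx_mul hG hF, pdxi_mul hG hF, Finset.sum_mul, Finset.mul_sum,
    ← Finset.sum_sub_distrib]
  exact Finset.sum_congr rfl fun s _ => by ring

end

section
variable {n : ℕ} {π : Fin n → Fin n → (Fin n → ℝ) → ℝ}

open ContinuousLinearMap in
theorem hasFDerivAt_Ph (hπ : ∀ i j, Differentiable ℝ (π i j)) (j : Fin n)
    (p : (Fin n → ℝ) × (Fin n → ℝ)) :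
    HasFDerivAt (Ph π j)
      (∑ k, (π j k p.1 • proj (R := ℝ) (φ := fun _ : Fin n => ℝ) k ∘L snd ℝ _ _
        + p.2 k • fderiv ℝ (π j k) p.1 ∘L fst ℝ _ _)) p := by
  refine HasFDerivAt.fun_sum fun k _ => HasFDerivAt.mul ?_ ?_
  · exact (hπ j k p.1).hasFDerivAt.comp p hasFDerivAt_fst
  · exact (proj k ∘L snd ℝ (Fin n → ℝ) (Fin n → ℝ)).hasFDerivAt

theorem pdx_Ph (hπ : ∀ i j, Differentiable ℝ (π i j)) (j s : Fin n)
    (p : (Fin n → ℝ) × (Fin n → ℝ)) :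
    pdx s (Ph π j) p = ∑ k, pd s (π j k) p.1 * p.2 k := by
  simp [pdx, pd, (hasFDerivAt_Ph hπ j p).fderiv, mul_comm]

theorem pdxi_Ph (hπ : ∀ i j, Differentiable ℝ (π i j)) (j s : Fin n)
    (p : (Fin n → ℝ) × (Fin n → ℝ)) :
    pdxi s (Ph π j) p = π j s p.1 := by
  simp [pdxi, (hasFDerivAt_Ph hπ j p).fderiv, Pi.single_apply]

theorem pd_eq_neg_of_antisymm (hanti : ∀ i j x, π i j x = -π j i x) (a b s : Fin n)
    (x : Fin n → ℝ) :
    pd s (π a b) x = -pd s (π b a) x := by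
  rw [show π a b = -π b a from funext (hanti a b), pd, fderiv_neg]
  rfl

theorem sum_mul_pdx_Ph_sub_sum_mul_pdx_Ph
    (hπ : ∀ i j, Differentiable ℝ (π i j)) (hanti : ∀ i j x, π i j x = -π j i x)
    (hJac : ∀ i j l (x : Fin n → ℝ),
      ∑ s, (π i s x * pd s (π j l) x + π j s x * pd s (π l i) x
            + π l s x * pd s (π i j) x) = 0)
    (i j : Fin n) (p : (Fin n → ℝ) × (Fin n → ℝ)) :
    ∑ s, π i s p.1 * pdx s (Ph π j) p - ∑ s, π j s p.1 * pdx s (Ph π i) p = PhBr π i j p := by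
  have jacobi (k : Fin n) : ∑ s, π i s p.1 * pd s (π j k) p.1 - ∑ s, π j s p.1 * pd s (π i k) p.1
      = ∑ s, pd s (π i j) p.1 * π s k p.1 := by
    have h := hJac i j k p.1
    simp only [pd_eq_neg_of_antisymm hanti k i, hanti k, mul_neg, neg_mul, Finset.sum_add_distrib,
      Finset.sum_neg_distrib, mul_comm (π _ k p.1)] at h
    linear_combination h
  calc ∑ s, π i s p.1 * pdx s (Ph π j) p - ∑ s, π j s p.1 * pdx s (Ph π i) p
      = ∑ k, (∑ s, π i s p.1 * pd s (π j k) p.1 - ∑ s, π j s p.1 * pd s (π i k) p.1) * p.2 k := by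
        simp only [pdx_Ph hπ, Finset.mul_sum, Finset.sum_mul, sub_mul, Finset.sum_sub_distrib,
          mul_assoc]
        congr 1 <;> exact Finset.sum_comm
    _ = PhBr π i j p := by
        simp only [jacobi, PhBr, Finset.sum_mul]
        exact Finset.sum_comm

theorem Dop_Ph_sub_Dop_Ph_sub_PhBr
    (hπ : ∀ i j, Differentiable ℝ (π i j)) (hanti : ∀ i j x, π i j x = -π j i x)
    (hJac : ∀ i j l (x : Fin n → ℝ),
      ∑ s, (π i s x * pd s (π j l) x + π j s x * pd s (π l i) x
            + π l s x * pd s (π i j) x) = 0)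
    (A K : Fin n → Fin n → (Fin n → ℝ) × (Fin n → ℝ) → ℝ)
    (i j : Fin n) (p : (Fin n → ℝ) × (Fin n → ℝ)) :
    Dop π K i (Ph π j) p - Dop π A j (Ph π i) p - PhBr π i j p
      = ∑ s, π i s p.1 * A j s p - ∑ s, π j s p.1 * K i s p := by
  rw [← sum_mul_pdx_Ph_sub_sum_mul_pdx_Ph hπ hanti hJac i j p]
  simp only [Dop, pdxi_Ph hπ, mul_comm (A _ _ p), mul_comm (K _ _ p)]
  ring

end

theorem nonlinear_connections_associated_iff_general
    (n : ℕ) (π : Fin n → Fin n → (Fin n → ℝ) → ℝ)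
    (A K : Fin n → Fin n → (Fin n → ℝ) × (Fin n → ℝ) → ℝ)
    (hπ : ∀ i j, ContDiff ℝ (⊤ : ℕ∞) (π i j))
    (hanti : ∀ i j (x : Fin n → ℝ), π i j x = -π j i x)
    (hJac : ∀ i j l (x : Fin n → ℝ),
      ∑ s, (π i s x * pd s (π j l) x + π j s x * pd s (π l i) x
            + π l s x * pd s (π i j) x) = 0) :
    (∀ i j (F : (Fin n → ℝ) × (Fin n → ℝ) → ℝ), ContDiff ℝ (⊤ : ℕ∞) F →
      ∀ p : (Fin n → ℝ) × (Fin n → ℝ),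
        (Dop π K i (fun q => Ph π j q * F q) p - Ph π j p * Dop π K i F p)
          - (Dop π A j (fun q => Ph π i q * F q) p - Ph π i p * Dop π A j F p)
          - PhBr π i j p * F p = 0)
    ↔ (∀ i j (p : (Fin n → ℝ) × (Fin n → ℝ)),
        ∑ s, π i s p.1 * A j s p = ∑ s, π j s p.1 * K i s p) := by
  have hπ' (i j : Fin n) : Differentiable ℝ (π i j) := (hπ i j).differentiable (by simp)
  have hcomm (i j : Fin n) {F : (Fin n → ℝ) × (Fin n → ℝ) → ℝ} (p : (Fin n → ℝ) × (Fin n → ℝ))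
      (hF : DifferentiableAt ℝ F p) :
      (Dop π K i (fun q => Ph π j q * F q) p - Ph π j p * Dop π K i F p)
          - (Dop π A j (fun q => Ph π i q * F q) p - Ph π i p * Dop π A j F p)
          - PhBr π i j p * F p
        = (∑ s, π i s p.1 * A j s p - ∑ s, π j s p.1 * K i s p) * F p := by
    rw [Dop_mul_sub_mul_Dop π K i (hasFDerivAt_Ph hπ' j p).differentiableAt hF,
      Dop_mul_sub_mul_Dop π A j (hasFDerivAt_Ph hπ' i p).differentiableAt hF,
      ← Dop_Ph_sub_Dop_Ph_sub_PhBr hπ' hanti hJac A K i j p]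
    ring
  constructor
  · intro h i j p
    have h1 := h i j (fun _ => 1) contDiff_const p
    rwa [hcomm i j p (differentiableAt_const 1), mul_one, sub_eq_zero] at h1
  · intro h i j F hF p
    rw [hcomm i j p ((hF.differentiable (by simp)) p), h i j p, sub_self, zero_mul]

/-- Nonlinear contravariant connections `D` (with matrix `A`) and `†D` (with matrix `K`)
are associated, i.e. `[†D^{dx^i}, (#dx^j)^] − [D^{dx^j}, (#dx^i)^] − (#[dx^i,dx^j])^ = 0`
as operators on smooth functions, iff `π^{is} A^j_s = π^{js} K^i_s`. -/
theorem nonlinear_connections_associated_iff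
    (n : ℕ) (π : Fin n → Fin n → (Fin n → ℝ) → ℝ)
    (A K : Fin n → Fin n → (Fin n → ℝ) × (Fin n → ℝ) → ℝ)
    (hπ : ∀ i j, ContDiff ℝ (⊤ : ℕ∞) (π i j))
    (hanti : ∀ i j (x : Fin n → ℝ), π i j x = -π j i x)
    (hJac : ∀ i j l (x : Fin n → ℝ),
      ∑ s, (π i s x * pd s (π j l) x + π j s x * pd s (π l i) x
            + π l s x * pd s (π i j) x) = 0)
    (hA : ∀ i s, ContDiff ℝ (⊤ : ℕ∞) (A i s))
    (hK : ∀ i s, ContDiff ℝ (⊤ : ℕ∞) (K i s)) :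
    (∀ i j (F : (Fin n → ℝ) × (Fin n → ℝ) → ℝ), ContDiff ℝ (⊤ : ℕ∞) F →
      ∀ p : (Fin n → ℝ) × (Fin n → ℝ),
        (Dop π K i (fun q => Ph π j q * F q) p - Ph π j p * Dop π K i F p)
          - (Dop π A j (fun q => Ph π i q * F q) p - Ph π i p * Dop π A j F p)
          - PhBr π i j p * F p = 0)
    ↔ (∀ i j (p : (Fin n → ℝ) × (Fin n → ℝ)),
        ∑ s, π i s p.1 * A j s p = ∑ s, π j s p.1 * K i s p) :=
  nonlinear_connections_associated_iff_general n π A K hπ hanti hJac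
end

section
/- If D is a Poisson nonlinear contravariant connection, then each D^α (α a 1-form) is a derivation of the Poisson algebra (H_Ω, {·,·}_Ω): concretely, in local coordinates, if F ∈ H_Ω with ∂F/∂ξ_i = π^{ij} a_j, and b_t ∂/∂ξ_t := [D^{dx^i}, a_t ∂/∂ξ_t], then ∂(D^{dx^i} F)/∂ξ_j = π^{jt} b_t, so D^{dx^i} F ∈ H_Ω with Hamiltonian field [D^{dx^i}, H_F]. -/
open Finset

section Calculus

variable {E F : Type*} [NormedAddCommGroup E] [NormedSpace ℝ E]
  [NormedAddCommGroup F] [NormedSpace ℝ F]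

theorem fderiv_fderiv_apply_field {f : E → F} {X : E → E} {x : E} (hf : ContDiffAt ℝ 2 f x)
    (hX : DifferentiableAt ℝ X x) (v : E) :
    fderiv ℝ (fun y => fderiv ℝ f y (X y)) x v
      = fderiv ℝ (fun y => fderiv ℝ f y v) x (X x) + fderiv ℝ f x (fderiv ℝ X x v) := by
  have hf' : DifferentiableAt ℝ (fderiv ℝ f) x :=
    (hf.fderiv_right le_rfl).differentiableAt one_ne_zero
  rw [fderiv_clm_apply hf' hX, fderiv_clm_apply hf' (differentiableAt_const v)]
  simp [hf.isSymmSndFDerivAt (by simp) v (X x), add_comm]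

theorem fderiv_comp_fst_apply {g : E → ℝ} {p : E × F}
    (hg : DifferentiableAt ℝ g p.1) (v : E × F) :
    fderiv ℝ (fun q => g q.1) p v = fderiv ℝ g p.1 v.1 := by
  have h : HasFDerivAt (fun q : E × F => g q.1) ((fderiv ℝ g p.1).comp (.fst ℝ E F)) p :=
    hg.hasFDerivAt.comp p hasFDerivAt_fst
  rw [h.fderiv]
  rfl

end Calculus

theorem ContinuousLinearMap.apply_eq_sum_smul_apply_single {ι R M : Type*} [Fintype ι]
    [DecidableEq ι] [Semiring R] [TopologicalSpace R] [AddCommMonoid M] [Module R M]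
    [TopologicalSpace M] (L : (ι → R) →L[R] M) (u : ι → R) :
    L u = ∑ s, u s • L (Pi.single s 1) := by
  conv_lhs => rw [pi_eq_sum_univ' u]
  simp [map_sum]

section Coordinates

variable {n : ℕ}

theorem fderiv_apply_eq_sum_pd (g : (Fin n → ℝ) → ℝ) (x u : Fin n → ℝ) :
    fderiv ℝ g x u = ∑ s, u s * pd s g x :=
  (fderiv ℝ g x).apply_eq_sum_smul_apply_single u

theorem fderiv_apply_eq_sum_pdx_add_sum_pdxi (f : (Fin n → ℝ) × (Fin n → ℝ) → ℝ)
    (p : (Fin n → ℝ) × (Fin n → ℝ)) (u w : Fin n → ℝ) :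
    fderiv ℝ f p (u, w) = ∑ s, u s * pdx s f p + ∑ s, w s * pdxi s f p := by
  rw [← (fderiv ℝ f p).comp_inl_add_comp_inr,
    ((fderiv ℝ f p).comp (.inl ℝ _ _)).apply_eq_sum_smul_apply_single,
    ((fderiv ℝ f p).comp (.inr ℝ _ _)).apply_eq_sum_smul_apply_single]
  rfl

def connectionField (π : Fin n → Fin n → (Fin n → ℝ) → ℝ)
    (A : Fin n → Fin n → (Fin n → ℝ) × (Fin n → ℝ) → ℝ) (m : Fin n)
    (p : (Fin n → ℝ) × (Fin n → ℝ)) : (Fin n → ℝ) × (Fin n → ℝ) :=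
  (fun s => π m s p.1, fun s => -A m s p)

variable {π : Fin n → Fin n → (Fin n → ℝ) → ℝ}
  {A : Fin n → Fin n → (Fin n → ℝ) × (Fin n → ℝ) → ℝ} {m : Fin n}
  {p : (Fin n → ℝ) × (Fin n → ℝ)}

theorem Dop_eq_fderiv_connectionField (F : (Fin n → ℝ) × (Fin n → ℝ) → ℝ)
    (p : (Fin n → ℝ) × (Fin n → ℝ)) :
    Dop π A m F p = fderiv ℝ F p (connectionField π A m p) := by
  simp [connectionField, fderiv_apply_eq_sum_pdx_add_sum_pdxi, Dop, sub_eq_add_neg]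

theorem Dop_mul {f g : (Fin n → ℝ) × (Fin n → ℝ) → ℝ} (hf : DifferentiableAt ℝ f p)
    (hg : DifferentiableAt ℝ g p) :
    Dop π A m (fun q => f q * g q) p = Dop π A m f p * g p + f p * Dop π A m g p := by
  simp only [Dop_eq_fderiv_connectionField, fderiv_fun_mul hf hg]
  simp only [add_apply, smul_apply, smul_eq_mul]
  ring

theorem Dop_sum {ι : Type*} (s : Finset ι) {f : ι → (Fin n → ℝ) × (Fin n → ℝ) → ℝ}
    (hf : ∀ i ∈ s, DifferentiableAt ℝ (f i) p) :
    Dop π A m (fun q => ∑ i ∈ s, f i q) p = ∑ i ∈ s, Dop π A m (f i) p := by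
  simp [Dop_eq_fderiv_connectionField, fderiv_fun_sum hf]

theorem Dop_comp_fst {g : (Fin n → ℝ) → ℝ} (hg : DifferentiableAt ℝ g p.1) :
    Dop π A m (fun q => g q.1) p = ∑ s, π m s p.1 * pd s g p.1 := by
  rw [Dop_eq_fderiv_connectionField, fderiv_comp_fst_apply hg]
  exact fderiv_apply_eq_sum_pd g p.1 _

theorem Dop_sum_mul_comp_fst {ρ : Fin n → (Fin n → ℝ) → ℝ}
    {a : Fin n → (Fin n → ℝ) × (Fin n → ℝ) → ℝ} (hρ : ∀ t, DifferentiableAt ℝ (ρ t) p.1)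
    (ha : ∀ t, DifferentiableAt ℝ (a t) p) :
    Dop π A m (fun q => ∑ t, ρ t q.1 * a t q) p
      = ∑ t, (∑ s, π m s p.1 * pd s (ρ t) p.1) * a t p + ∑ t, ρ t p.1 * Dop π A m (a t) p := by
  have hρ' : ∀ t, DifferentiableAt ℝ (fun q : (Fin n → ℝ) × (Fin n → ℝ) => ρ t q.1) p :=
    fun t => (hρ t).comp p differentiableAt_fst
  rw [Dop_sum (f := fun t q => ρ t q.1 * a t q) _ fun t _ => (hρ' t).mul (ha t)]
  simp only [Dop_mul (hρ' _) (ha _), Dop_comp_fst (hρ _), sum_add_distrib]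

theorem hasFDerivAt_connectionField (hπ : ∀ s, DifferentiableAt ℝ (π m s) p.1)
    (hA : ∀ s, DifferentiableAt ℝ (A m s) p) :
    HasFDerivAt (connectionField π A m)
      ((ContinuousLinearMap.pi fun s => (fderiv ℝ (π m s) p.1).comp (.fst ℝ _ _)).prod
        (ContinuousLinearMap.pi fun s => -fderiv ℝ (A m s) p)) p :=
  (hasFDerivAt_pi.2 fun s => (hπ s).hasFDerivAt.comp p hasFDerivAt_fst).prodMk
    (hasFDerivAt_pi.2 fun s => (hA s).hasFDerivAt.neg)

theorem pdxi_Dop (hπ : ∀ s, DifferentiableAt ℝ (π m s) p.1)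
    (hA : ∀ s, DifferentiableAt ℝ (A m s) p) {F : (Fin n → ℝ) × (Fin n → ℝ) → ℝ}
    (hF : ContDiffAt ℝ 2 F p) (j : Fin n) :
    pdxi j (Dop π A m F) p = Dop π A m (pdxi j F) p - ∑ s, pdxi j (A m s) p * pdxi s F p := by
  have hX := hasFDerivAt_connectionField hπ hA
  have hD : Dop π A m F = fun q => fderiv ℝ F q (connectionField π A m q) :=
    funext (Dop_eq_fderiv_connectionField F)
  rw [pdxi, hD, fderiv_fderiv_apply_field hF hX.differentiableAt,
    ← Dop_eq_fderiv_connectionField]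
  have hfibre : fderiv ℝ (connectionField π A m) p (0, Pi.single j 1)
      = (0, fun s => -pdxi j (A m s) p) := by
    rw [hX.fderiv]
    ext <;> simp [pdxi]
  rw [hfibre, fderiv_apply_eq_sum_pdx_add_sum_pdxi]
  simp only [Pi.zero_apply, zero_mul, sum_const_zero, neg_mul, sum_neg_distrib, zero_sub,
    ← sub_eq_add_neg]
  rfl

theorem poisson_condition_contract {i j : Fin n}
    (hpois : ∀ t, ∑ s, π i s p.1 * pd s (π j t) p.1 - ∑ s, pdxi j (A i s) p * π s t p.1
      - ∑ s, pdxi t (A i s) p * π j s p.1 = 0) (a : Fin n → ℝ) :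
    ∑ t, (∑ s, π i s p.1 * pd s (π j t) p.1) * a t - ∑ s, pdxi j (A i s) p * ∑ t, π s t p.1 * a t
      = ∑ t, π j t p.1 * ∑ k, pdxi k (A i t) p * a k := by
  calc _ = ∑ t, (∑ s, π i s p.1 * pd s (π j t) p.1 - ∑ s, pdxi j (A i s) p * π s t p.1) * a t := by
        simp only [sub_mul, sum_sub_distrib]
        congr 1
        simp only [mul_sum, sum_mul]
        rw [sum_comm]
        simp only [mul_assoc]
    _ = ∑ t, (∑ s, pdxi t (A i s) p * π j s p.1) * a t := by
        congr! 2 with t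
        linarith [hpois t]
    _ = _ := by
        simp only [sum_mul, mul_sum]
        rw [sum_comm]
        simp only [mul_comm, mul_left_comm]

end Coordinates

theorem poisson_connection_derivation_of_hamiltonian_space_general
    (n : ℕ) (π : Fin n → Fin n → (Fin n → ℝ) → ℝ)
    (A : Fin n → Fin n → (Fin n → ℝ) × (Fin n → ℝ) → ℝ)
    (hπ : ∀ i j, ContDiff ℝ (⊤ : ℕ∞) (π i j))
    (hA : ∀ i s, ContDiff ℝ (⊤ : ℕ∞) (A i s))
    (hpois : ∀ m i j (p : (Fin n → ℝ) × (Fin n → ℝ)),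
      ∑ s, π m s p.1 * pd s (π i j) p.1
        - ∑ s, pdxi i (A m s) p * π s j p.1
        - ∑ s, pdxi j (A m s) p * π i s p.1 = 0)
    (F : (Fin n → ℝ) × (Fin n → ℝ) → ℝ) (a : Fin n → (Fin n → ℝ) × (Fin n → ℝ) → ℝ)
    (hF : ContDiff ℝ (⊤ : ℕ∞) F) (ha : ∀ t, ContDiff ℝ (⊤ : ℕ∞) (a t))
    (hFa : ∀ j p, pdxi j F p = ∑ t, π j t p.1 * a t p) (i : Fin n) :
    ∀ j (p : (Fin n → ℝ) × (Fin n → ℝ)),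
      pdxi j (fun q => Dop π A i F q) p
        = ∑ t, π j t p.1 *
            (∑ s, π i s p.1 * pdx s (a t) p - ∑ s, A i s p * pdxi s (a t) p
              + ∑ k, pdxi k (A i t) p * a k p) := by
  intro j p
  have dπ : ∀ k l, Differentiable ℝ (π k l) := fun k l => (hπ k l).differentiable (by simp)
  have dA : ∀ k l, Differentiable ℝ (A k l) := fun k l => (hA k l).differentiable (by simp)
  have da : ∀ t, Differentiable ℝ (a t) := fun t => (ha t).differentiable (by simp)
  rw [pdxi_Dop (fun s => dπ i s p.1) (fun s => dA i s p) (hF.contDiffAt.of_le (by norm_cast)),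
    show pdxi j F = fun q => ∑ t, π j t q.1 * a t q from funext (hFa j),
    Dop_sum_mul_comp_fst (fun t => dπ j t p.1) (fun t => da t p)]
  simp_rw [hFa]
  rw [add_sub_right_comm, poisson_condition_contract (hpois i j · p), add_comm]
  simp only [mul_add, sum_add_distrib]
  rfl

/-- For a Poisson nonlinear contravariant connection `D`, each `D^{dx^i}` preserves
`H_Ω`: if `∂F/∂ξ_j = π^{jt} a_t`, then, with
`b_t = π^{is} ∂a_t/∂x^s − A^i_s ∂a_t/∂ξ_s + (∂A^i_t/∂ξ_k) a_k` (the components of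
`[D^{dx^i}, H_F]`), one has `∂(D^{dx^i} F)/∂ξ_j = π^{jt} b_t`; so `D^{dx^i} F ∈ H_Ω`
with Hamiltonian field `[D^{dx^i}, H_F]`. -/
theorem poisson_connection_derivation_of_hamiltonian_space
    (n : ℕ) (π : Fin n → Fin n → (Fin n → ℝ) → ℝ)
    (A : Fin n → Fin n → (Fin n → ℝ) × (Fin n → ℝ) → ℝ)
    (hπ : ∀ i j, ContDiff ℝ (⊤ : ℕ∞) (π i j))
    (hanti : ∀ i j (x : Fin n → ℝ), π i j x = -π j i x)
    (hA : ∀ i s, ContDiff ℝ (⊤ : ℕ∞) (A i s))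
    (hpois : ∀ m i j (p : (Fin n → ℝ) × (Fin n → ℝ)),
      ∑ s, π m s p.1 * pd s (π i j) p.1
        - ∑ s, pdxi i (A m s) p * π s j p.1
        - ∑ s, pdxi j (A m s) p * π i s p.1 = 0)
    (F : (Fin n → ℝ) × (Fin n → ℝ) → ℝ) (a : Fin n → (Fin n → ℝ) × (Fin n → ℝ) → ℝ)
    (hF : ContDiff ℝ (⊤ : ℕ∞) F) (ha : ∀ t, ContDiff ℝ (⊤ : ℕ∞) (a t))
    (hFa : ∀ j p, pdxi j F p = ∑ t, π j t p.1 * a t p) (i : Fin n) :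
    ∀ j (p : (Fin n → ℝ) × (Fin n → ℝ)),
      pdxi j (fun q => Dop π A i F q) p
        = ∑ t, π j t p.1 *
            (∑ s, π i s p.1 * pdx s (a t) p - ∑ s, A i s p * pdxi s (a t) p
              + ∑ k, pdxi k (A i t) p * a k p) :=
  poisson_connection_derivation_of_hamiltonian_space_general n π A hπ hA hpois F a hF ha hFa i
end
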